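/- The set of all (a,b) ∈ ℝ² satisfying 3a + b > 0, 3a + (5/4)b > 0, 3a + (3/4)b > 0, 3a + (1/2)b > 0 and 3a + (3/2)b > 0 is contained in the union of the topological interiors of the conical hull of {(1/3, 0), (2/3, -1), (0, 1)}, the conical hull of {(1/3, 0), (0, 1), (-1/3, 2)}, and the conical hull of {(1/3, 0), (2/3, -1), (1, -2)} in ℝ². -/
import Mathlib


/-- The conical hull of three vectors in `ℝ × ℝ`: all linear combinations
with nonnegative real coefficients. -/
def coneHull3 (v₁ v₂ v₃ : ℝ × ℝ) : Set (ℝ × ℝ) :=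
  {x | ∃ c₁ c₂ c₃ : ℝ, 0 ≤ c₁ ∧ 0 ≤ c₂ ∧ 0 ≤ c₃ ∧ x = c₁ • v₁ + c₂ • v₂ + c₃ • v₃}

lemma open1 : IsOpen {p : ℝ × ℝ | 0 < p.1 ∧ 0 < 3 * p.1 + 2 * p.2} :=
  (isOpen_lt continuous_const continuous_fst).and
    (isOpen_lt continuous_const (by fun_prop))

lemma open2 : IsOpen {p : ℝ × ℝ | 0 < p.2 ∧ 0 < 6 * p.1 + p.2} :=
  (isOpen_lt continuous_const continuous_snd).and
    (isOpen_lt continuous_const (by fun_prop))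

lemma open3 : IsOpen {p : ℝ × ℝ | p.2 < 0 ∧ 0 < 2 * p.1 + p.2} :=
  (isOpen_lt continuous_snd continuous_const).and
    (isOpen_lt continuous_const (by fun_prop))

lemma sub1 : {p : ℝ × ℝ | 0 < p.1 ∧ 0 < 3 * p.1 + 2 * p.2} ⊆
    interior (coneHull3 (1/3, 0) (2/3, -1) (0, 1)) := by
  apply interior_maximal _ open1
  rintro ⟨a, b⟩ ⟨h1, h2⟩
  refine ⟨0, (3/2) * a, (3/2) * a + b, le_refl 0, by linarith, by linarith, ?_⟩
  simp only [Prod.ext_iff, Prod.smul_mk, smul_eq_mul, Prod.mk_add_mk, Prod.fst, Prod.snd]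
  constructor <;> ring

lemma sub2 : {p : ℝ × ℝ | 0 < p.2 ∧ 0 < 6 * p.1 + p.2} ⊆
    interior (coneHull3 (1/3, 0) (0, 1) (-1/3, 2)) := by
  apply interior_maximal _ open2
  rintro ⟨a, b⟩ ⟨h1, h2⟩
  refine ⟨3 * a + b / 2, 0, b / 2, by linarith, le_refl 0, by linarith, ?_⟩
  simp only [Prod.ext_iff, Prod.smul_mk, smul_eq_mul, Prod.mk_add_mk, Prod.fst, Prod.snd]
  constructor <;> ring

lemma sub3 : {p : ℝ × ℝ | p.2 < 0 ∧ 0 < 2 * p.1 + p.2} ⊆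
    interior (coneHull3 (1/3, 0) (2/3, -1) (1, -2)) := by
  apply interior_maximal _ open3
  rintro ⟨a, b⟩ ⟨h1, h2⟩
  refine ⟨3 * a + (3/2) * b, 0, -b / 2, by linarith, le_refl 0, by linarith, ?_⟩
  simp only [Prod.ext_iff, Prod.smul_mk, smul_eq_mul, Prod.mk_add_mk, Prod.fst, Prod.snd]
  constructor <;> ring

theorem stmt_7 :
    {p : ℝ × ℝ | 3 * p.1 + p.2 > 0 ∧
      3 * p.1 + (5/4) * p.2 > 0 ∧
      3 * p.1 + (3/4) * p.2 > 0 ∧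
      3 * p.1 + (1/2) * p.2 > 0 ∧
      3 * p.1 + (3/2) * p.2 > 0} ⊆
      interior (coneHull3 (1/3, 0) (2/3, -1) (0, 1)) ∪
      interior (coneHull3 (1/3, 0) (0, 1) (-1/3, 2)) ∪
      interior (coneHull3 (1/3, 0) (2/3, -1) (1, -2)) := by
  rintro ⟨a, b⟩ ⟨h1, h2, h3, h4, h5⟩
  rcases lt_trichotomy b 0 with hb | hb | hb
  · exact Or.inr (sub3 ⟨hb, by simp at h5 ⊢; linarith⟩)
  · exact Or.inl (Or.inl (sub1 ⟨by simp at h1 ⊢; linarith, by simp at h1 ⊢; linarith⟩))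
  · exact Or.inl (Or.inr (sub2 ⟨hb, by simp at h4 ⊢; linarith⟩))
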